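/- arXiv:2408.00704 — 2 statements merged into one kernel-verified Lean document; each statement's English description precedes it below -/
import Mathlib

section
/- Let γ^μ_{αβ} be symmetric bilinear maps S₊ × S₊ → V satisfying the Fierz identity 2 γ^μ_{α(β} γ_{μ|γ)δ} = − γ^μ_{βγ} γ_{μαδ}. If Q ∈ S₊ satisfies γ^μ_{αβ} Q^α Q^β = 0, then for all α, δ one has Q^β Q^γ γ^μ_{αβ} γ_{μγδ} = 0. -/
/-!
Contract the Fierz identity with `Q^β Q^γ`. The two terms of the symmetrized left-hand side
contribute equally, giving twice the wanted contraction, while the right-hand side factors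
through `γ^μ_{βγ} Q^β Q^γ`, which vanishes for a pure spinor.
-/

open Finset

section FierzContraction

variable {R ι σ : Type*} [CommRing R] [Fintype ι] [Fintype σ]

theorem sum_sum_mul_mul_add_swap (Q : σ → R) (f : σ → σ → R) :
    ∑ β, ∑ β', Q β * Q β' * (f β β' + f β' β) = 2 * ∑ β, ∑ β', Q β * Q β' * f β β' := by
  simp only [mul_add, sum_add_distrib]
  rw [sum_comm (f := fun β β' => Q β * Q β' * f β' β)]
  simp only [mul_comm (Q _) (Q _)]
  ring

theorem two_mul_contraction_eq_of_fierz (γ : ι → σ → σ → R)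
    (hfierz : ∀ α β β' δ,
      ∑ μ, (γ μ α β * γ μ β' δ + γ μ α β' * γ μ β δ) = - ∑ μ, γ μ β β' * γ μ α δ)
    (Q : σ → R) (α δ : σ) :
    2 * ∑ β, ∑ β', ∑ μ, Q β * Q β' * γ μ α β * γ μ β' δ =
      - ∑ μ, (∑ β, ∑ β', γ μ β β' * Q β * Q β') * γ μ α δ := by
  calc 2 * ∑ β, ∑ β', ∑ μ, Q β * Q β' * γ μ α β * γ μ β' δ
      = ∑ β, ∑ β', Q β * Q β' * ∑ μ, (γ μ α β * γ μ β' δ + γ μ α β' * γ μ β δ) := by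
        simp only [sum_add_distrib]
        rw [sum_sum_mul_mul_add_swap Q fun β β' => ∑ μ, γ μ α β * γ μ β' δ]
        simp only [mul_sum, mul_assoc]
    _ = ∑ β, ∑ β', Q β * Q β' * - ∑ μ, γ μ β β' * γ μ α δ := by
        simp only [hfierz]
    _ = - ∑ μ, (∑ β, ∑ β', γ μ β β' * Q β * Q β') * γ μ α δ := by
        simp only [mul_neg, sum_neg_distrib, mul_sum, sum_mul, neg_inj]
        rw [sum_congr rfl fun β _ => sum_comm, sum_comm]
        exact sum_congr rfl fun μ _ => sum_congr rfl fun β _ => sum_congr rfl fun β' _ => by ring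

end FierzContraction

theorem fierz_pure_spinor_contraction_general
    (γ : Fin 10 → Fin 16 → Fin 16 → ℂ)
    (hfierz : ∀ α β β' δ : Fin 16,
      ∑ μ, (γ μ α β * γ μ β' δ + γ μ α β' * γ μ β δ) = - ∑ μ, γ μ β β' * γ μ α δ)
    (Q : Fin 16 → ℂ)
    (hQ : ∀ μ, ∑ α, ∑ β, γ μ α β * Q α * Q β = 0) :
    ∀ α δ : Fin 16, ∑ β, ∑ β', ∑ μ, Q β * Q β' * γ μ α β * γ μ β' δ = 0 := by
  intro α δ
  have h := two_mul_contraction_eq_of_fierz γ hfierz Q α δ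
  simp only [hQ, zero_mul, sum_const_zero, neg_zero] at h
  exact (mul_eq_zero.mp h).resolve_left two_ne_zero

/-- If the symmetric chiral gamma matrices satisfy the ten-dimensional
Fierz identity `2 γ^μ_{α(β} γ_{μ|γ)δ} = − γ^μ_{βγ} γ_{μαδ}` and `Q ∈ S₊` satisfies the
pure-spinor condition `γ^μ_{αβ} Q^α Q^β = 0`, then for all `α, δ` one has
`Q^β Q^γ γ^μ_{αβ} γ_{μγδ} = 0`. -/
theorem fierz_pure_spinor_contraction
    (γ : Fin 10 → Fin 16 → Fin 16 → ℂ)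
    (hsym : ∀ μ α β, γ μ α β = γ μ β α)
    (hfierz : ∀ α β β' δ : Fin 16,
      ∑ μ, (γ μ α β * γ μ β' δ + γ μ α β' * γ μ β δ) = - ∑ μ, γ μ β β' * γ μ α δ)
    (Q : Fin 16 → ℂ)
    (hQ : ∀ μ, ∑ α, ∑ β, γ μ α β * Q α * Q β = 0) :
    ∀ α δ : Fin 16, ∑ β, ∑ β', ∑ μ, Q β * Q β' * γ μ α β * γ μ β' δ = 0 :=
  fierz_pure_spinor_contraction_general γ hfierz Q hQ
end

section
/- Let 𝔤 be the L∞-algebra on 𝔰𝔩(5,ℂ) ⊕ Λ²ℂ⁵ ⊕ (ℂ⁵)*[−2] with the brackets of the extended holomorphic symmetry algebra (nontrivial μ₂ and the nonzero 𝔰𝔩(5)-equivariant μ₄ : L* ⊗ (Λ²L)^{∧3} → 𝔰𝔩(5)), and let 𝔥 be any strict graded Lie algebra structure on the same graded vector space. Then there is no L∞-isomorphism φ : 𝔤 ⇝ 𝔥. -/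
open scoped BigOperators

/-- The Koszul sign `χ(σ, x)` of a permutation `σ` acting on homogeneous elements of
degrees `d`, in the skew-symmetric convention. -/
def koszulSign {n : ℕ} (d : Fin n → ℤ) (σ : Equiv.Perm (Fin n)) : ℤ :=
  (Equiv.Perm.sign σ : ℤ) *
    ∏ p ∈ Finset.univ.filter (fun p : Fin n × Fin n => p.1 < p.2 ∧ σ p.2 < σ p.1),
      (-1 : ℤ) ^ (d (σ p.1) * d (σ p.2)).natAbs

/-- `σ` is an `(i, n−i)`-shuffle. -/
def IsShuffle {n : ℕ} (i : ℕ) (σ : Equiv.Perm (Fin n)) : Prop :=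
  (∀ a b : Fin n, a < b → b.val < i → σ a < σ b) ∧
  (∀ a b : Fin n, a < b → i ≤ a.val → σ a < σ b)

instance {n i : ℕ} : DecidablePred (IsShuffle (n := n) i) := fun σ => by
  unfold IsShuffle; infer_instance

/-- The homotopy Jacobi identities. -/
def HomotopyJacobi {W : Type} [AddCommGroup W] [Module ℂ W]
    (μ : (k : ℕ) → (Fin k → W) → W) (n : ℕ) (d : Fin n → ℤ) (x : Fin n → W) : Prop :=
  ∑ i : Fin n, ∑ σ ∈ Finset.univ.filter (IsShuffle (i.val + 1)),
    ((-1 : ℤ) ^ (n - (i.val + 1)) * koszulSign d σ) •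
      μ (n - (i.val + 1) + 1)
        (Fin.cons
          (μ (i.val + 1) (fun t : Fin (i.val + 1) => x (σ (Fin.castLE i.isLt t))))
          (fun t : Fin (n - (i.val + 1)) =>
            x (σ ⟨i.val + 1 + t.val, by have h1 := i.isLt; have h2 := t.isLt; omega⟩)))
    = 0

/-- Lexicographic order on a sigma type of blocks. -/
def SigmaLexLt {j : ℕ} {k : Fin j → ℕ} (p q : (t : Fin j) × Fin (k t)) : Prop :=
  p.1 < q.1 ∨ (p.1 = q.1 ∧ p.2.val < q.2.val)

instance {j : ℕ} {k : Fin j → ℕ} (p q : (t : Fin j) × Fin (k t)) :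
    Decidable (SigmaLexLt p q) := by unfold SigmaLexLt; infer_instance

/-- `e` enumerates the arguments blockwise monotonically (i.e. it is the data of a
`(k₁,…,k_j)`-shuffle). -/
def IsBlockShuffle {i j : ℕ} {k : Fin j → ℕ} (e : ((t : Fin j) × Fin (k t)) ≃ Fin i) :
    Prop :=
  ∀ (t : Fin j) (s s' : Fin (k t)), s < s' → e ⟨t, s⟩ < e ⟨t, s'⟩

instance {i j : ℕ} {k : Fin j → ℕ} : DecidablePred (IsBlockShuffle (i := i) (j := j) (k := k)) :=
  fun e => by unfold IsBlockShuffle; infer_instance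

/-- The Koszul sign `χ(σ, x)` of the block shuffle `e` on degrees `d`. -/
def chiSign {i j : ℕ} {k : Fin j → ℕ} (d : Fin i → ℤ)
    (e : ((t : Fin j) × Fin (k t)) ≃ Fin i) : ℤ :=
  ∏ p ∈ Finset.univ.filter
      (fun p : ((t : Fin j) × Fin (k t)) × ((t : Fin j) × Fin (k t)) =>
        SigmaLexLt p.1 p.2 ∧ e p.2 < e p.1),
    (-(-1 : ℤ) ^ (d (e p.1) * d (e p.2)).natAbs)

/-- The extra sign factor in `ζ(σ, k, x)`:
`(−1)^{∑_{m<n} k_m k_n + ∑_m k_m (j−m) + ∑_{m} (1−k_m) ∑_{arguments before block m} |x|}`. -/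
def zetaExtra {i j : ℕ} (k : Fin j → ℕ) (d : Fin i → ℤ)
    (e : ((t : Fin j) × Fin (k t)) ≃ Fin i) : ℤ :=
  (-1 : ℤ) ^
    ((∑ p ∈ Finset.univ.filter (fun p : Fin j × Fin j => p.1 < p.2),
        ((k p.1 : ℤ) * (k p.2 : ℤ)))
      + (∑ m : Fin j, (k m : ℤ) * ((j : ℤ) - 1 - (m.val : ℤ)))
      + (∑ m : Fin j, (1 - (k m : ℤ)) *
          ∑ p ∈ Finset.univ.filter (fun p : (t : Fin j) × Fin (k t) => p.1 < m),
            d (e p))).natAbs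

/-- The `i`-ary coherence relation for an `L∞`-morphism `φ : (𝔤, μg) ⇝ (𝔥, μh)`,
evaluated on homogeneous elements `x` of degrees `d`:
`∑_j (1/j!) ∑ ζ(σ,k,x) μ_j^𝔥(φ^{(k₁)}(…),…,φ^{(k_j)}(…))
  = ∑_{j+k=i} (−1)^k χ(σ,x) φ^{(k+1)}(μ_j^𝔤(…), …)`. -/
def MorphCoherence {W₁ W₂ : Type}
    [AddCommGroup W₁] [Module ℂ W₁] [AddCommGroup W₂] [Module ℂ W₂]
    (μg : (k : ℕ) → (Fin k → W₁) → W₁) (μh : (k : ℕ) → (Fin k → W₂) → W₂)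
    (φ : (n : ℕ) → (Fin n → W₁) → W₂)
    (i : ℕ) (d : Fin i → ℤ) (x : Fin i → W₁) : Prop :=
  (∑ j ∈ Finset.Icc 1 i,
    ∑ c ∈ Finset.univ.filter (fun c : Fin j → Fin i => ∑ t, ((c t).val + 1) = i),
      ∑ e ∈ Finset.univ.filter
          (fun e : ((t : Fin j) × Fin ((c t).val + 1)) ≃ Fin i => IsBlockShuffle e),
        (((Nat.factorial j : ℂ))⁻¹ *
            (((chiSign d e * zetaExtra (fun t => (c t).val + 1) d e) : ℤ) : ℂ)) •
          μh j (fun t => φ ((c t).val + 1) (fun s => x (e ⟨t, s⟩))))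
  =
  ∑ jj : Fin i, ∑ σ ∈ Finset.univ.filter (IsShuffle (jj.val + 1)),
    ((((-1 : ℤ) ^ (i - (jj.val + 1)) * koszulSign d σ) : ℤ) : ℂ) •
      φ (i - (jj.val + 1) + 1)
        (Fin.cons (μg (jj.val + 1) (fun t => x (σ (Fin.castLE jj.isLt t))))
          (fun t : Fin (i - (jj.val + 1)) =>
            x (σ ⟨jj.val + 1 + t.val, by have h1 := jj.isLt; have h2 := t.isLt; omega⟩)))
/-! ## The extended holomorphic symmetry algebra `𝔰𝔩(5) ⊕ Λ²L ⊕ L*[−2]` -/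

/-- The underlying space: `𝔤𝔩(5)`-part (containing `𝔰𝔩(5)`), `Λ²L`-part (antisymmetric
matrices `r^{ij}`), and `L*`-part (covectors `e_i`, placed in degree 2). -/
abbrev W6 : Type :=
  Matrix (Fin 5) (Fin 5) ℂ × Matrix (Fin 5) (Fin 5) ℂ × (Fin 5 → ℂ)

/-- Traceless matrices `𝔰𝔩(5) ⊆ 𝔤𝔩(5)`. -/
noncomputable def sl5sub : Submodule ℂ (Matrix (Fin 5) (Fin 5) ℂ) :=
  LinearMap.ker (Matrix.traceLinearMap (Fin 5) ℂ ℂ)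

/-- Antisymmetric matrices, modelling `Λ²L`. -/
noncomputable def asym : Submodule ℂ (Matrix (Fin 5) (Fin 5) ℂ) where
  carrier := {b | b.transpose = -b}
  add_mem' := by
    intro a b ha hb
    simp only [Set.mem_setOf_eq] at *
    rw [Matrix.transpose_add, ha, hb, neg_add]
  zero_mem' := by simp
  smul_mem' := by
    intro c b hb
    simp only [Set.mem_setOf_eq] at *
    rw [Matrix.transpose_smul, hb, smul_neg]

/-- The grading: `𝔰𝔩(5) ⋉ Λ²L` in degree `0`, `L*` in degree `2`, nothing else. -/
noncomputable def grading6 : ℤ → Submodule ℂ W6 := fun i =>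
  if i = 0 then sl5sub.prod (asym.prod ⊥)
  else if i = 2 then (⊥ : Submodule ℂ (Matrix (Fin 5) (Fin 5) ℂ)).prod
    ((⊥ : Submodule ℂ (Matrix (Fin 5) (Fin 5) ℂ)).prod ⊤)
  else ⊥

/-- The binary bracket `μ₂`: the `𝔰𝔩(5)` bracket, the natural actions of `𝔰𝔩(5)` on
`Λ²L` and on `L*`, and `[Λ²L,Λ²L] = [Λ²L,L*] = [L*,L*] = 0`. -/
noncomputable def mu2c (x y : W6) : W6 :=
  (x.1 * y.1 - y.1 * x.1,
   (x.1 * y.2.1 + y.2.1 * x.1.transpose) - (y.1 * x.2.1 + x.2.1 * y.1.transpose),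
   fun k => (-(∑ i, y.2.2 i * x.1 i k)) + (∑ i, x.2.2 i * y.1 i k))

/-- The Levi-Civita symbol `ε^{ijklm}`. -/
noncomputable def eps5 (f : Fin 5 → Fin 5) : ℂ :=
  if h : Function.Bijective f then ((Equiv.Perm.sign (Equiv.ofBijective f h) : ℤ) : ℂ) else 0

/-- The basis element `r̃^i_j = r^i_j − (1/5) δ^i_j r^k_k` of `𝔰𝔩(5)`. -/
noncomputable def rt (i j : Fin 5) : Matrix (Fin 5) (Fin 5) ℂ :=
  Matrix.single i j 1 - (5 : ℂ)⁻¹ • (if i = j then (1 : Matrix (Fin 5) (Fin 5) ℂ) else 0)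

/-- The block `δ_i^{[j}ε^{k]lmab}δ^{[n}_a r̃^{p]}_b` (unnormalized antisymmetrizations,
internal indices `a, b` summed). -/
noncomputable def T6 (i j k l m n p : Fin 5) : Matrix (Fin 5) (Fin 5) ℂ :=
  ∑ a, ∑ b,
    (((if i = j then (1 : ℂ) else 0) * eps5 ![k, l, m, a, b]
      - (if i = k then (1 : ℂ) else 0) * eps5 ![j, l, m, a, b])) •
    ((if n = a then (1 : ℂ) else 0) • rt p b - (if p = a then (1 : ℂ) else 0) • rt n b)

/-- The component `μ₄(e, b₁, b₂, b₃) ∈ 𝔰𝔩(5)` of the quaternary bracket, i.e. the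
`𝔰𝔩(5)`-equivariant projection `L* ⊗ (Λ²L)^{∧3} → 𝔰𝔩(5)` of Theorem 3.1. -/
noncomputable def mu4comp (e : Fin 5 → ℂ) (b1 b2 b3 : Matrix (Fin 5) (Fin 5) ℂ) :
    Matrix (Fin 5) (Fin 5) ℂ :=
  (8 : ℂ)⁻¹ • ∑ i, ∑ j, ∑ k, ∑ l, ∑ m, ∑ n, ∑ p,
    (e i * b1 j k * b2 l m * b3 n p) •
      (-(T6 i j k l m n p) + T6 i j k n p l m - T6 i l m n p j k
        + T6 i l m j k n p - T6 i n p j k l m + T6 i n p l m j k)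

/-- The quaternary bracket `μ₄` on `W6` (graded-skew extension of `mu4comp`). -/
noncomputable def mu4c (x1 x2 x3 x4 : W6) : W6 :=
  (mu4comp x1.2.2 x2.2.1 x3.2.1 x4.2.1 - mu4comp x2.2.2 x1.2.1 x3.2.1 x4.2.1
    + mu4comp x3.2.2 x1.2.1 x2.2.1 x4.2.1 - mu4comp x4.2.2 x1.2.1 x2.2.1 x3.2.1,
   0, 0)

/-! The elements `e = e⁰ ∈ L*` and `bₐ = r⁰ᵃ ∈ Λ²L` (`a = 1, 2, 3`) have no `𝔰𝔩(5)`-component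
and pairwise vanishing brackets, while `μ₄(e, b₁, b₂, b₃)` has a nonzero `𝔰𝔩(5)`-component (its
`(0,4)` entry is `-6`). Let `φ : 𝔤 ⇝ 𝔥` be an `L∞`-isomorphism into a strict `𝔥`. Since `𝔤` is
concentrated in even degrees, `φ⁽²⁾` vanishes on these elements and `φ⁽³⁾(b₁, b₂, b₃)` has
degree `-2`, so it vanishes too. The 4-ary coherence relation then reads
`φ¹(μ₄(e, b)) = ∑ₐ ±[φ¹(bₐ), φ³(e, b without bₐ)]_𝔥`. Since `φ¹` is bijective on degree `0`,
we can write `φ³(e, …) = φ¹(zₐ)`, and the 2-ary relation `φ¹[u, v] = [φ¹u, φ¹v]_𝔥` together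
with injectivity of `φ¹` gives `μ₄(e, b) = ∑ₐ ±μ₂(bₐ, zₐ)`. The right side has no
`𝔰𝔩(5)`-component, a contradiction. -/

section LInfinity

variable {W₁ W₂ : Type} [AddCommGroup W₁] [Module ℂ W₁] [AddCommGroup W₂] [Module ℂ W₂]

noncomputable def morphCoherenceLHS (μh : (k : ℕ) → (Fin k → W₂) → W₂)
    (φ : (n : ℕ) → (Fin n → W₁) → W₂) (i : ℕ) (d : Fin i → ℤ) (x : Fin i → W₁) : W₂ :=
  ∑ j ∈ Finset.Icc 1 i,
    ∑ c ∈ Finset.univ.filter (fun c : Fin j → Fin i => ∑ t, ((c t).val + 1) = i),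
      ∑ e ∈ Finset.univ.filter
          (fun e : ((t : Fin j) × Fin ((c t).val + 1)) ≃ Fin i => IsBlockShuffle e),
        (((Nat.factorial j : ℂ))⁻¹ *
            (((chiSign d e * zetaExtra (fun t => (c t).val + 1) d e) : ℤ) : ℂ)) •
          μh j (fun t => φ ((c t).val + 1) (fun s => x (e ⟨t, s⟩)))

def morphCoherenceRHS (μg : (k : ℕ) → (Fin k → W₁) → W₁) (φ : (n : ℕ) → (Fin n → W₁) → W₂)
    (i : ℕ) (d : Fin i → ℤ) (x : Fin i → W₁) : W₂ :=
  ∑ jj : Fin i, ∑ σ ∈ Finset.univ.filter (IsShuffle (jj.val + 1)),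
    ((((-1 : ℤ) ^ (i - (jj.val + 1)) * koszulSign d σ) : ℤ) : ℂ) •
      φ (i - (jj.val + 1) + 1)
        (Fin.cons (μg (jj.val + 1) (fun t => x (σ (Fin.castLE jj.isLt t))))
          (fun t : Fin (i - (jj.val + 1)) =>
            x (σ ⟨jj.val + 1 + t.val, by have h1 := jj.isLt; have h2 := t.isLt; omega⟩)))

theorem morphCoherence_iff (μg : (k : ℕ) → (Fin k → W₁) → W₁)
    (μh : (k : ℕ) → (Fin k → W₂) → W₂) (φ : (n : ℕ) → (Fin n → W₁) → W₂) (i : ℕ)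
    (d : Fin i → ℤ) (x : Fin i → W₁) :
    MorphCoherence μg μh φ i d x ↔
      morphCoherenceLHS μh φ i d x = morphCoherenceRHS μg φ i d x :=
  Iff.rfl

theorem isShuffle_self_iff {n : ℕ} (σ : Equiv.Perm (Fin n)) : IsShuffle n σ ↔ σ = 1 := by
  constructor
  · intro h
    have hmono : StrictMono σ := fun a b hab => h.1 a b hab b.isLt
    exact Equiv.ext (congrFun ((hmono.range_inj strictMono_id).1 (by simp [Set.range_id])))
  · rintro rfl
    exact ⟨fun a b hab _ => hab, fun a b hab _ => hab⟩

theorem koszulSign_one {n : ℕ} (d : Fin n → ℤ) : koszulSign d 1 = 1 := by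
  simp only [koszulSign, Equiv.Perm.sign_one, Units.val_one, Equiv.Perm.one_apply, one_mul]
  exact Finset.prod_eq_one fun p hp => absurd (Finset.mem_filter.1 hp).2 fun h => h.1.asymm h.2

theorem apply_cons_of_eq_zero {W V : Type*} (ψ : (n : ℕ) → (Fin n → W) → V) {m : ℕ}
    (hm : m = 0) (A : W) (g : Fin m → W) : ψ (m + 1) (Fin.cons A g) = ψ 1 (fun _ => A) := by
  subst hm
  congr 1
  funext t
  fin_cases t
  rfl

theorem morphCoherenceRHS_eq_of_lower_vanish
    (μg : (k : ℕ) → MultilinearMap ℂ (fun _ : Fin k => W₁) W₁)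
    (φ : (n : ℕ) → MultilinearMap ℂ (fun _ : Fin n => W₁) W₂) {n : ℕ} (d : Fin (n + 1) → ℤ)
    (x : Fin (n + 1) → W₁)
    (hlow : ∀ k, k + 1 < n + 1 → ∀ v : Fin (k + 1) → Fin (n + 1),
      μg (k + 1) (fun t => x (v t)) = 0) :
    morphCoherenceRHS (fun k w => μg k w) (fun n w => φ n w) (n + 1) d x =
      φ 1 (fun _ => μg (n + 1) x) := by
  rw [morphCoherenceRHS, Finset.sum_eq_single_of_mem (Fin.last n) (Finset.mem_univ _)]
  · simp only [Fin.val_last]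
    rw [Finset.filter_congr (fun σ _ => isShuffle_self_iff σ), Finset.filter_eq',
      if_pos (Finset.mem_univ _), Finset.sum_singleton,
      apply_cons_of_eq_zero (fun n w => φ n w) (Nat.sub_self _), Nat.sub_self, pow_zero,
      one_mul, koszulSign_one, Int.cast_one, one_smul]
    rfl
  · intro jj _ hjj
    have hlt : jj.val + 1 < n + 1 := by
      have := Fin.val_lt_last hjj
      omega
    refine Finset.sum_eq_zero fun σ _ => ?_
    rw [hlow _ hlt, (φ _).map_coord_zero 0 (by simp), smul_zero]

theorem sum_filter_isBlockShuffle {i j : ℕ} {k : Fin j → ℕ} {M : Type*} [AddCommMonoid M]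
    (E : Fin i → ((t : Fin j) × Fin (k t)) ≃ Fin i) (p : (t : Fin j) × Fin (k t))
    (hE : ∀ a, IsBlockShuffle (E a)) (hEp : ∀ a, E a p = a)
    (hunique : ∀ e, IsBlockShuffle e → E (e p) = e)
    (F : (((t : Fin j) × Fin (k t)) ≃ Fin i) → M) :
    ∑ e ∈ Finset.univ.filter IsBlockShuffle, F e = ∑ a, F (E a) := by
  refine Finset.sum_nbij' (fun e => e p) E (fun _ _ => Finset.mem_univ _)
    (fun a _ => Finset.mem_filter.2 ⟨Finset.mem_univ _, hE a⟩) ?_ (fun a _ => hEp a) ?_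
  · intro e he
    exact hunique e (Finset.mem_filter.1 he).2
  · intro e he
    rw [hunique e (Finset.mem_filter.1 he).2]

/-- The coherence relations only see this skew-symmetrization of `μ₂^𝔥`. -/
noncomputable def skewBracket {W : Type} [AddCommGroup W] [Module ℂ W]
    (μ : MultilinearMap ℂ (fun _ : Fin 2 => W) W) (a b : W) : W :=
  (2⁻¹ : ℂ) • (μ ![a, b] - μ ![b, a])

theorem skewBracket_zero_right {W : Type} [AddCommGroup W] [Module ℂ W]
    (μ : MultilinearMap ℂ (fun _ : Fin 2 => W) W) (a : W) : skewBracket μ a 0 = 0 := by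
  rw [skewBracket, μ.map_coord_zero 1 (by simp), μ.map_coord_zero 0 (by simp), sub_zero,
    smul_zero]

end LInfinity

section BlockShuffles

noncomputable def blockShuffle11 (a : Fin 2) :
    ((t : Fin 2) × Fin (((![0, 0] : Fin 2 → Fin 2) t).val + 1)) ≃ Fin 2 :=
  Equiv.ofBijective (fun | ⟨0, _⟩ => a | ⟨1, s⟩ => a.succAbove s) (by revert a; decide)

noncomputable def blockShuffle13 (a : Fin 4) :
    ((t : Fin 2) × Fin (((![0, 2] : Fin 2 → Fin 4) t).val + 1)) ≃ Fin 4 :=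
  Equiv.ofBijective (fun | ⟨0, _⟩ => a | ⟨1, s⟩ => a.succAbove s) (by revert a; decide)

noncomputable def blockShuffle31 (a : Fin 4) :
    ((t : Fin 2) × Fin (((![2, 0] : Fin 2 → Fin 4) t).val + 1)) ≃ Fin 4 :=
  Equiv.ofBijective (fun | ⟨0, s⟩ => a.succAbove s | ⟨1, _⟩ => a) (by revert a; decide)

theorem blockShuffle11_unique
    (e : ((t : Fin 2) × Fin (((![0, 0] : Fin 2 → Fin 2) t).val + 1)) ≃ Fin 2)
    (he : IsBlockShuffle e) : blockShuffle11 (e ⟨0, 0⟩) = e := by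
  have key : ∀ f : ((t : Fin 2) × Fin (((![0, 0] : Fin 2 → Fin 2) t).val + 1)) → Fin 2,
      Function.Bijective f → (∀ t s s', s < s' → f ⟨t, s⟩ < f ⟨t, s'⟩) →
      ⇑(blockShuffle11 (f ⟨0, 0⟩)) = f := by decide
  exact Equiv.coe_fn_injective (key e e.bijective he)

set_option maxRecDepth 10000 in
theorem blockShuffle13_unique
    (e : ((t : Fin 2) × Fin (((![0, 2] : Fin 2 → Fin 4) t).val + 1)) ≃ Fin 4)
    (he : IsBlockShuffle e) : blockShuffle13 (e ⟨0, 0⟩) = e := by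
  have key : ∀ f : ((t : Fin 2) × Fin (((![0, 2] : Fin 2 → Fin 4) t).val + 1)) → Fin 4,
      Function.Bijective f → (∀ t s s', s < s' → f ⟨t, s⟩ < f ⟨t, s'⟩) →
      ⇑(blockShuffle13 (f ⟨0, 0⟩)) = f := by decide
  exact Equiv.coe_fn_injective (key e e.bijective he)

set_option maxRecDepth 10000 in
theorem blockShuffle31_unique
    (e : ((t : Fin 2) × Fin (((![2, 0] : Fin 2 → Fin 4) t).val + 1)) ≃ Fin 4)
    (he : IsBlockShuffle e) : blockShuffle31 (e ⟨1, 0⟩) = e := by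
  have key : ∀ f : ((t : Fin 2) × Fin (((![2, 0] : Fin 2 → Fin 4) t).val + 1)) → Fin 4,
      Function.Bijective f → (∀ t s s', s < s' → f ⟨t, s⟩ < f ⟨t, s'⟩) →
      ⇑(blockShuffle31 (f ⟨1, 0⟩)) = f := by decide
  exact Equiv.coe_fn_injective (key e e.bijective he)

theorem sum_blockShuffle11 {M : Type*} [AddCommMonoid M]
    (F : (((t : Fin 2) × Fin (((![0, 0] : Fin 2 → Fin 2) t).val + 1)) ≃ Fin 2) → M) :
    ∑ e ∈ Finset.univ.filter IsBlockShuffle, F e = ∑ a, F (blockShuffle11 a) :=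
  sum_filter_isBlockShuffle _ _ (by decide) (by decide) blockShuffle11_unique F

theorem sum_blockShuffle13 {M : Type*} [AddCommMonoid M]
    (F : (((t : Fin 2) × Fin (((![0, 2] : Fin 2 → Fin 4) t).val + 1)) ≃ Fin 4) → M) :
    ∑ e ∈ Finset.univ.filter IsBlockShuffle, F e = ∑ a, F (blockShuffle13 a) :=
  sum_filter_isBlockShuffle _ _ (by decide) (by decide) blockShuffle13_unique F

theorem sum_blockShuffle31 {M : Type*} [AddCommMonoid M]
    (F : (((t : Fin 2) × Fin (((![2, 0] : Fin 2 → Fin 4) t).val + 1)) ≃ Fin 4) → M) :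
    ∑ e ∈ Finset.univ.filter IsBlockShuffle, F e = ∑ a, F (blockShuffle31 a) :=
  sum_filter_isBlockShuffle _ _ (by decide) (by decide) blockShuffle31_unique F

theorem sign_blockShuffle11 (a : Fin 2) :
    chiSign ![0, 0] (blockShuffle11 a) *
      zetaExtra (fun t => ((![0, 0] : Fin 2 → Fin 2) t).val + 1) ![0, 0] (blockShuffle11 a)
      = (-1) ^ a.val := by
  revert a; decide

theorem sign_blockShuffle13 (a : Fin 4) :
    chiSign ![2, 0, 0, 0] (blockShuffle13 a) *
      zetaExtra (fun t => ((![0, 2] : Fin 2 → Fin 4) t).val + 1) ![2, 0, 0, 0]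
        (blockShuffle13 a) = (-1) ^ a.val := by
  revert a; decide

theorem sign_blockShuffle31 (a : Fin 4) :
    chiSign ![2, 0, 0, 0] (blockShuffle31 a) *
      zetaExtra (fun t => ((![2, 0] : Fin 2 → Fin 4) t).val + 1) ![2, 0, 0, 0]
        (blockShuffle31 a) = -(-1) ^ a.val := by
  revert a; decide

theorem comp_blockShuffle11 {W V : Type*} (ψ : (n : ℕ) → (Fin n → W) → V) (x : Fin 2 → W)
    (a : Fin 2) :
    (fun t => ψ (((![0, 0] : Fin 2 → Fin 2) t).val + 1) (fun s => x (blockShuffle11 a ⟨t, s⟩)))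
      = ![ψ 1 (fun _ => x a), ψ 1 (Fin.removeNth a x)] := by
  funext t
  fin_cases t <;> rfl

theorem comp_blockShuffle13 {W V : Type*} (ψ : (n : ℕ) → (Fin n → W) → V) (x : Fin 4 → W)
    (a : Fin 4) :
    (fun t => ψ (((![0, 2] : Fin 2 → Fin 4) t).val + 1) (fun s => x (blockShuffle13 a ⟨t, s⟩)))
      = ![ψ 1 (fun _ => x a), ψ 3 (Fin.removeNth a x)] := by
  funext t
  fin_cases t <;> rfl

theorem comp_blockShuffle31 {W V : Type*} (ψ : (n : ℕ) → (Fin n → W) → V) (x : Fin 4 → W)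
    (a : Fin 4) :
    (fun t => ψ (((![2, 0] : Fin 2 → Fin 4) t).val + 1) (fun s => x (blockShuffle31 a ⟨t, s⟩)))
      = ![ψ 3 (Fin.removeNth a x), ψ 1 (fun _ => x a)] := by
  funext t
  fin_cases t <;> rfl

end BlockShuffles

section Coherence

variable {W₁ W₂ : Type} [AddCommGroup W₁] [Module ℂ W₁] [AddCommGroup W₂] [Module ℂ W₂]
  (μg : (k : ℕ) → MultilinearMap ℂ (fun _ : Fin k => W₁) W₁)
  (μh : (k : ℕ) → MultilinearMap ℂ (fun _ : Fin k => W₂) W₂)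
  (φ : (n : ℕ) → MultilinearMap ℂ (fun _ : Fin n => W₁) W₂)

theorem morphCoherenceLHS_of_strict (hstrict : ∀ k, k ≠ 2 → μh k = 0) {i : ℕ} (hi : 2 ≤ i)
    (d : Fin i → ℤ) (x : Fin i → W₁) :
    morphCoherenceLHS (fun k w => μh k w) (fun n w => φ n w) i d x =
      ∑ c ∈ Finset.univ.filter (fun c : Fin 2 → Fin i => ∑ t, ((c t).val + 1) = i),
        ∑ e ∈ Finset.univ.filter
            (fun e : ((t : Fin 2) × Fin ((c t).val + 1)) ≃ Fin i => IsBlockShuffle e),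
          ((2⁻¹ : ℂ) * (((chiSign d e * zetaExtra (fun t => (c t).val + 1) d e) : ℤ) : ℂ)) •
            μh 2 (fun t => φ ((c t).val + 1) (fun s => x (e ⟨t, s⟩))) := by
  rw [morphCoherenceLHS, Finset.sum_eq_single_of_mem 2 (Finset.mem_Icc.2 ⟨by norm_num, hi⟩)]
  · norm_num [Nat.factorial]
  · intro j _ hj
    simp [hstrict j hj]

theorem skewBracket_eq_of_morphCoherence_two (hstrict : ∀ k, k ≠ 2 → μh k = 0)
    (x : Fin 2 → W₁) (hg1 : ∀ v : Fin 1 → Fin 2, μg 1 (fun t => x (v t)) = 0)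
    (h : MorphCoherence (fun k w => μg k w) (fun k w => μh k w) (fun n w => φ n w)
      2 ![0, 0] x) :
    skewBracket (μh 2) (φ 1 (fun _ => x 0)) (φ 1 (fun _ => x 1)) = φ 1 (fun _ => μg 2 x) := by
  have hlow : ∀ k, k + 1 < 2 → ∀ v : Fin (k + 1) → Fin 2, μg (k + 1) (fun t => x (v t)) = 0 :=
    fun k hk v => by
      obtain rfl : k = 0 := by omega
      exact hg1 v
  rw [morphCoherence_iff, morphCoherenceRHS_eq_of_lower_vanish μg φ _ _ hlow,
    morphCoherenceLHS_of_strict μh φ hstrict le_rfl] at h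
  rw [← h, show Finset.univ.filter (fun c : Fin 2 → Fin 2 => ∑ t, ((c t).val + 1) = 2)
      = {![0, 0]} by decide, Finset.sum_singleton, sum_blockShuffle11, Fin.sum_univ_two,
    sign_blockShuffle11, sign_blockShuffle11, comp_blockShuffle11 (fun n w => φ n w),
    comp_blockShuffle11 (fun n w => φ n w)]
  have h0 : Fin.removeNth 0 x = fun _ => x 1 := funext fun t => by fin_cases t; rfl
  have h1 : Fin.removeNth 1 x = fun _ => x 0 := funext fun t => by fin_cases t; rfl
  rw [h0, h1, skewBracket]
  norm_num
  module

theorem skewBracket_sum_eq_of_morphCoherence_four (hstrict : ∀ k, k ≠ 2 → μh k = 0)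
    (x : Fin 4 → W₁)
    (hlow : ∀ k, k + 1 < 4 → ∀ v : Fin (k + 1) → Fin 4, μg (k + 1) (fun t => x (v t)) = 0)
    (hφ2 : ∀ v : Fin 2 → Fin 4, φ 2 (fun t => x (v t)) = 0)
    (h : MorphCoherence (fun k w => μg k w) (fun k w => μh k w) (fun n w => φ n w)
      4 ![2, 0, 0, 0] x) :
    ∑ a : Fin 4, ((-1 : ℂ) ^ a.val) •
        skewBracket (μh 2) (φ 1 (fun _ => x a)) (φ 3 (Fin.removeNth a x))
      = φ 1 (fun _ => μg 4 x) := by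
  rw [morphCoherence_iff, morphCoherenceRHS_eq_of_lower_vanish μg φ _ _ hlow,
    morphCoherenceLHS_of_strict μh φ hstrict (by norm_num)] at h
  rw [← h, show Finset.univ.filter (fun c : Fin 2 → Fin 4 => ∑ t, ((c t).val + 1) = 4)
      = {![0, 2], ![1, 1], ![2, 0]} by decide, Finset.sum_insert (by decide),
    Finset.sum_insert (by decide), Finset.sum_singleton, sum_blockShuffle13, sum_blockShuffle31]
  have hmid : ∀ e : ((t : Fin 2) × Fin (((![1, 1] : Fin 2 → Fin 4) t).val + 1)) ≃ Fin 4,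
      μh 2 (fun t => φ (((![1, 1] : Fin 2 → Fin 4) t).val + 1) (fun s => x (e ⟨t, s⟩))) = 0 :=
    fun e => (μh 2).map_coord_zero 0 (hφ2 fun s => e ⟨0, s⟩)
  simp only [hmid, smul_zero, Finset.sum_const_zero, zero_add, sign_blockShuffle13,
    sign_blockShuffle31, comp_blockShuffle13 (fun n w => φ n w),
    comp_blockShuffle31 (fun n w => φ n w), ← Finset.sum_add_distrib]
  refine Finset.sum_congr rfl fun a _ => ?_
  rw [skewBracket]
  push_cast
  module

end Coherence

theorem exists_mem_map_eq_of_injective {V : Type*} [AddCommGroup V] [Module ℂ V]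
    [FiniteDimensional ℂ V] (f : V →ₗ[ℂ] V) (hf : Function.Injective f) (p : Submodule ℂ V)
    (hp : ∀ v ∈ p, f v ∈ p) {y : V} (hy : y ∈ p) : ∃ z ∈ p, f z = y := by
  have hsurj : Function.Surjective (f.restrict hp) :=
    LinearMap.injective_iff_surjective.1 fun a b hab =>
      Subtype.ext (hf (congrArg Subtype.val hab))
  obtain ⟨z, hz⟩ := hsurj ⟨y, hy⟩
  exact ⟨z, z.2, congrArg Subtype.val hz⟩

section Grading

theorem eq_zero_of_mem_grading6 {z : ℤ} (h0 : z ≠ 0) (h2 : z ≠ 2) {w : W6}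
    (hw : w ∈ grading6 z) : w = 0 := by
  rwa [grading6, if_neg h0, if_neg h2, Submodule.mem_bot] at hw

theorem eq_zero_of_mem_grading6_of_odd {z : ℤ} (hz : Odd z) {w : W6} (hw : w ∈ grading6 z) :
    w = 0 :=
  eq_zero_of_mem_grading6 (by rintro rfl; norm_num at hz) (by rintro rfl; norm_num at hz) hw

theorem mem_grading6_two (v : Fin 5 → ℂ) : ((0, 0, v) : W6) ∈ grading6 2 := by
  simp [grading6]

theorem mem_grading6_zero_of_mem_asym {b : Matrix (Fin 5) (Fin 5) ℂ} (hb : b ∈ asym) :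
    ((0, b, 0) : W6) ∈ grading6 0 := by
  rw [grading6, if_pos rfl]
  exact ⟨Submodule.zero_mem _, hb, Submodule.zero_mem _⟩

def MorphDegrees (φ : (n : ℕ) → MultilinearMap ℂ (fun _ : Fin n => W6) W6) : Prop :=
  ∀ (n : ℕ) (d : Fin n → ℤ) (x : Fin n → W6), (∀ i, x i ∈ grading6 (d i)) →
    φ n x ∈ grading6 ((∑ i, d i) + (1 - (n : ℤ)))

namespace MorphDegrees

variable {φ : (n : ℕ) → MultilinearMap ℂ (fun _ : Fin n => W6) W6}

theorem map_one_mem_zero (hφ : MorphDegrees φ) {w : W6} (hw : w ∈ grading6 0) :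
    φ 1 (fun _ => w) ∈ grading6 0 := by
  have h := hφ 1 (fun _ => 0) (fun _ => w) fun _ => hw
  norm_num at h
  exact h

theorem map_two_eq_zero (hφ : MorphDegrees φ) {d : Fin 2 → ℤ} (hd : ∀ t, Even (d t))
    {x : Fin 2 → W6} (hx : ∀ t, x t ∈ grading6 (d t)) : φ 2 x = 0 :=
  eq_zero_of_mem_grading6_of_odd ((Finset.even_sum _ fun t _ => hd t).add_odd (by decide))
    (hφ 2 d x hx)

end MorphDegrees

end Grading

section Brackets

theorem mu2c_fst_eq_zero {x : W6} (hx : x.1 = 0) (y : W6) : (mu2c x y).1 = 0 := by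
  simp [mu2c, hx]

theorem mu2c_eq_zero {x y : W6} (hx : x.1 = 0) (hy : y.1 = 0) : mu2c x y = 0 := by
  ext <;> simp [mu2c, hx, hy]

theorem mu4comp_zero_left (b₁ b₂ b₃ : Matrix (Fin 5) (Fin 5) ℂ) : mu4comp 0 b₁ b₂ b₃ = 0 := by
  simp [mu4comp]

noncomputable def leviCivita (f : Fin 5 → Fin 5) : ℤ :=
  if h : Function.Bijective f then (Equiv.Perm.sign (Equiv.ofBijective f h) : ℤ) else 0

theorem eps5_eq_leviCivita (f : Fin 5 → Fin 5) : eps5 f = leviCivita f := by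
  unfold eps5 leviCivita
  split <;> simp

theorem rt_apply_zero_four (q b : Fin 5) : rt q b 0 4 = if q = 0 ∧ b = 4 then 1 else 0 := by
  by_cases h : q = b <;> simp [rt, Matrix.single, h]

/-- The `(0,4)` entry of `T6 i j k l m n p`: only `r̃^q_b` with `q = 0`, `b = 4` contributes,
which collapses the internal sums over `a` and `b`. -/
noncomputable def T6EntryZeroFour (i j k l m n p : Fin 5) : ℤ :=
  (if p = 0 then 1 else 0) *
    ((if i = j then 1 else 0) * leviCivita ![k, l, m, n, 4]
      - (if i = k then 1 else 0) * leviCivita ![j, l, m, n, 4])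
  - (if n = 0 then 1 else 0) *
    ((if i = j then 1 else 0) * leviCivita ![k, l, m, p, 4]
      - (if i = k then 1 else 0) * leviCivita ![j, l, m, p, 4])

theorem T6_apply_zero_four (i j k l m n p : Fin 5) :
    T6 i j k l m n p 0 4 = T6EntryZeroFour i j k l m n p := by
  unfold T6 T6EntryZeroFour
  push_cast [eps5_eq_leviCivita]
  simp only [Matrix.sum_apply, Matrix.smul_apply, Matrix.sub_apply, rt_apply_zero_four,
    smul_eq_mul, mul_ite, mul_one, mul_zero, ite_and]
  fin_cases n <;> fin_cases p <;> simp

noncomputable def mu4KernelZeroFour (i j k l m n p : Fin 5) : ℤ :=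
  -T6EntryZeroFour i j k l m n p + T6EntryZeroFour i j k n p l m
    - T6EntryZeroFour i l m n p j k + T6EntryZeroFour i l m j k n p
    - T6EntryZeroFour i n p j k l m + T6EntryZeroFour i n p l m j k

theorem mu4Kernel_apply_zero_four (i j k l m n p : Fin 5) :
    (-(T6 i j k l m n p) + T6 i j k n p l m - T6 i l m n p j k
        + T6 i l m j k n p - T6 i n p j k l m + T6 i n p l m j k) 0 4
      = mu4KernelZeroFour i j k l m n p := by
  simp only [Matrix.add_apply, Matrix.sub_apply, Matrix.neg_apply, T6_apply_zero_four,
    mu4KernelZeroFour]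
  push_cast
  ring

theorem mu4comp_apply_zero_four (e : Fin 5 → ℂ) (b₁ b₂ b₃ : Matrix (Fin 5) (Fin 5) ℂ) :
    mu4comp e b₁ b₂ b₃ 0 4 = 8⁻¹ * ∑ i, e i * ∑ j, ∑ k, b₁ j k * ∑ l, ∑ m, b₂ l m *
      ∑ n, ∑ p, b₃ n p * (mu4KernelZeroFour i j k l m n p : ℂ) := by
  rw [mu4comp, Matrix.smul_apply]
  simp only [Matrix.sum_apply, Matrix.smul_apply, mu4Kernel_apply_zero_four, smul_eq_mul,
    Finset.mul_sum]
  exact Fintype.sum_congr _ _ fun i => Fintype.sum_congr _ _ fun j =>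
    Fintype.sum_congr _ _ fun k => Fintype.sum_congr _ _ fun l => Fintype.sum_congr _ _ fun m =>
    Fintype.sum_congr _ _ fun n => Fintype.sum_congr _ _ fun p => by ring

noncomputable def wedgeMatrix (a b : Fin 5) : Matrix (Fin 5) (Fin 5) ℂ :=
  Matrix.single a b 1 - Matrix.single b a 1

theorem wedgeMatrix_mem_asym (a b : Fin 5) : wedgeMatrix a b ∈ asym := by
  show (wedgeMatrix a b).transpose = -wedgeMatrix a b
  rw [wedgeMatrix, Matrix.transpose_sub, Matrix.transpose_single, Matrix.transpose_single,
    neg_sub]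

theorem sum_wedgeMatrix_mul (a b : Fin 5) (g : Fin 5 → Fin 5 → ℂ) :
    ∑ j, ∑ k, wedgeMatrix a b j k * g j k = g a b - g b a := by
  simp [wedgeMatrix, Matrix.single, sub_mul, ite_mul, ite_and, Finset.sum_sub_distrib,
    Finset.sum_ite_eq]

theorem mu4comp_wedgeMatrix_apply_zero_four :
    mu4comp (Pi.single 0 1) (wedgeMatrix 0 1) (wedgeMatrix 0 2) (wedgeMatrix 0 3) 0 4 = -6 := by
  rw [mu4comp_apply_zero_four]
  simp only [Pi.single_apply, ite_mul, one_mul, zero_mul, Finset.sum_ite_eq', Finset.mem_univ,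
    if_true, sum_wedgeMatrix_mul]
  have h : mu4KernelZeroFour 0 0 1 0 2 0 3 - mu4KernelZeroFour 0 0 1 0 2 3 0
      - (mu4KernelZeroFour 0 0 1 2 0 0 3 - mu4KernelZeroFour 0 0 1 2 0 3 0)
      - (mu4KernelZeroFour 0 1 0 0 2 0 3 - mu4KernelZeroFour 0 1 0 0 2 3 0
        - (mu4KernelZeroFour 0 1 0 2 0 0 3 - mu4KernelZeroFour 0 1 0 2 0 3 0)) = -48 := by
    decide
  rw [← Int.cast_inj (α := ℂ)] at h
  push_cast at h
  rw [h]
  norm_num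

theorem mu4c_wedgeMatrix_fst_apply_zero_four :
    (mu4c (0, 0, Pi.single 0 1) (0, wedgeMatrix 0 1, 0) (0, wedgeMatrix 0 2, 0)
      (0, wedgeMatrix 0 3, 0)).1 0 4 = -6 := by
  simp [mu4c, mu4comp_zero_left, mu4comp_wedgeMatrix_apply_zero_four]

end Brackets

theorem exists_mu4_eq_sum_mu2
    (μg μh φ : (k : ℕ) → MultilinearMap ℂ (fun _ : Fin k => W6) W6)
    (hμ2 : ∀ x y : W6, μg 2 ![x, y] = mu2c x y) (hgother : ∀ k, k ≠ 2 → k ≠ 4 → μg k = 0)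
    (hstrict : ∀ k, k ≠ 2 → μh k = 0) (hφdeg : MorphDegrees φ)
    (hφcoh : ∀ (i : ℕ), 1 ≤ i → ∀ (d : Fin i → ℤ) (x : Fin i → W6),
      (∀ t, x t ∈ grading6 (d t)) →
      MorphCoherence (fun k v => μg k v) (fun k v => μh k v) (fun n v => φ n v) i d x)
    (hφinj : Function.Injective (fun w : W6 => φ 1 (fun _ => w)))
    (x : Fin 4 → W6) (hx : ∀ a, x a ∈ grading6 (![2, 0, 0, 0] a)) (hfst : ∀ a, (x a).1 = 0) :
    ∃ z : Fin 3 → W6,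
      μg 4 x = ∑ a : Fin 3, ((-1 : ℂ) ^ (a.val + 1)) • μg 2 ![x a.succ, z a] := by
  set F : W6 →ₗ[ℂ] W6 := (MultilinearMap.ofSubsingleton ℂ W6 W6 (0 : Fin 1)).symm (φ 1)
  have hφ3 : ∀ a, φ 3 (Fin.removeNth a x) ∈ grading6 (-![2, 0, 0, 0] a) := by
    have hdeg : ∀ a : Fin 4,
        ∑ t, Fin.removeNth a ![2, 0, 0, 0] t + (1 - ((3 : ℕ) : ℤ)) = -![2, 0, 0, 0] a := by
      decide
    intro a
    rw [← hdeg]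
    exact hφdeg 3 (Fin.removeNth a ![2, 0, 0, 0]) _ fun t => hx (a.succAbove t)
  have hxs : ∀ a : Fin 3, x a.succ ∈ grading6 0 := fun a => by
    have h := hx a.succ
    fin_cases a <;> exact h
  have hY : ∀ a : Fin 3, φ 3 (Fin.removeNth a.succ x) ∈ grading6 0 := fun a => by
    have h := hφ3 a.succ
    fin_cases a <;> exact h
  choose z hz0 hz using fun a =>
    exists_mem_map_eq_of_injective F hφinj _ (fun _ => hφdeg.map_one_mem_zero) (hY a)
  have h2 : ∀ a, skewBracket (μh 2) (φ 1 fun _ => x a.succ) (φ 3 (Fin.removeNth a.succ x))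
      = F (μg 2 ![x a.succ, z a]) := fun a => by
    rw [← hz a]
    refine skewBracket_eq_of_morphCoherence_two μg μh φ hstrict ![x a.succ, z a]
      (fun v => by rw [hgother 1 (by norm_num) (by norm_num)]; rfl)
      (hφcoh 2 (by norm_num) ![0, 0] _ fun t => ?_)
    fin_cases t
    exacts [hxs a, hz0 a]
  have hlow : ∀ k, k + 1 < 4 → ∀ v : Fin (k + 1) → Fin 4, μg (k + 1) (fun t => x (v t)) = 0 := by
    intro k hk v
    obtain rfl | rfl | rfl : k = 0 ∨ k = 1 ∨ k = 2 := by omega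
    · rw [hgother 1 (by norm_num) (by norm_num)]; rfl
    · rw [show (fun t => x (v t)) = ![x (v 0), x (v 1)] by funext t; fin_cases t <;> rfl, hμ2,
        mu2c_eq_zero (hfst _) (hfst _)]
    · rw [hgother 3 (by norm_num) (by norm_num)]; rfl
  have heven : ∀ a : Fin 4, Even (![2, 0, 0, 0] a : ℤ) := by decide
  have h4 := skewBracket_sum_eq_of_morphCoherence_four μg μh φ hstrict x hlow
    (fun v => hφdeg.map_two_eq_zero (fun t => heven (v t)) fun t => hx (v t))
    (hφcoh 4 (by norm_num) _ x hx)
  -- `φ³` of the three degree-0 arguments has degree `-2`, so the `a = 0` term vanishes.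
  rw [Fin.sum_univ_succ, eq_zero_of_mem_grading6 (by decide) (by decide) (hφ3 0),
    skewBracket_zero_right, smul_zero, zero_add] at h4
  refine ⟨z, hφinj ?_⟩
  show φ 1 (fun _ => μg 4 x) = F _
  rw [← h4, map_sum]
  refine Finset.sum_congr rfl fun a _ => ?_
  rw [map_smul, h2]
  simp

theorem no_strict_minimal_model_general
    (μg : (k : ℕ) → MultilinearMap ℂ (fun _ : Fin k => W6) W6)
    (hμ2 : ∀ x y : W6, μg 2 ![x, y] = mu2c x y)
    (hμ4 : ∀ x1 x2 x3 x4 : W6, μg 4 ![x1, x2, x3, x4] = mu4c x1 x2 x3 x4)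
    (hgother : ∀ k, k ≠ 2 → k ≠ 4 → μg k = 0)
    (μh : (k : ℕ) → MultilinearMap ℂ (fun _ : Fin k => W6) W6)
    (hstrict : ∀ k, k ≠ 2 → μh k = 0) :
    ¬ ∃ φ : (n : ℕ) → MultilinearMap ℂ (fun _ : Fin n => W6) W6,
        (∀ (n : ℕ) (d : Fin n → ℤ) (x : Fin n → W6), (∀ i, x i ∈ grading6 (d i)) →
          φ n x ∈ grading6 ((∑ i, d i) + (1 - (n : ℤ)))) ∧
        (∀ (i : ℕ), 1 ≤ i → ∀ (d : Fin i → ℤ) (x : Fin i → W6),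
          (∀ t, x t ∈ grading6 (d t)) →
          MorphCoherence (fun k v => μg k v) (fun k v => μh k v) (fun n v => φ n v) i d x) ∧
        Function.Bijective (fun w : W6 => φ 1 (fun _ => w)) := by
  rintro ⟨φ, hφdeg, hφcoh, hφbij⟩
  have hx : ∀ a, ![((0, 0, Pi.single 0 1) : W6), (0, wedgeMatrix 0 1, 0),
      (0, wedgeMatrix 0 2, 0), (0, wedgeMatrix 0 3, 0)] a ∈ grading6 (![2, 0, 0, 0] a) := by
    intro a
    fin_cases a
    exacts [mem_grading6_two _, mem_grading6_zero_of_mem_asym (wedgeMatrix_mem_asym 0 1),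
      mem_grading6_zero_of_mem_asym (wedgeMatrix_mem_asym 0 2),
      mem_grading6_zero_of_mem_asym (wedgeMatrix_mem_asym 0 3)]
  obtain ⟨z, hz⟩ := exists_mu4_eq_sum_mu2 μg μh φ hμ2 hgother hstrict hφdeg hφcoh hφbij.1 _ hx
    fun a => by fin_cases a <;> rfl
  have h04 := congrArg (fun w : W6 => w.1 0 4) hz
  simp [hμ4, hμ2, mu4c_wedgeMatrix_fst_apply_zero_four, Fin.sum_univ_three,
    mu2c_fst_eq_zero] at h04

/-- Let `𝔤` be the `L∞`-algebra on `𝔰𝔩(5,ℂ) ⊕ Λ²ℂ⁵ ⊕ (ℂ⁵)*[−2]` with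
the brackets of the extended holomorphic symmetry algebra (the nontrivial `μ₂` and the
nonzero equivariant `μ₄ : L* ⊗ (Λ²L)^{∧3} → 𝔰𝔩(5)`), and let `𝔥` be any strict graded
Lie algebra structure on the same graded vector space.  Then there is no
`L∞`-isomorphism `φ : 𝔤 ⇝ 𝔥`. -/
theorem no_strict_minimal_model
    (μg : (k : ℕ) → MultilinearMap ℂ (fun _ : Fin k => W6) W6)
    (hμ2 : ∀ x y : W6, μg 2 ![x, y] = mu2c x y)
    (hμ4 : ∀ x1 x2 x3 x4 : W6, μg 4 ![x1, x2, x3, x4] = mu4c x1 x2 x3 x4)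
    (hgother : ∀ k, k ≠ 2 → k ≠ 4 → μg k = 0)
    (μh : (k : ℕ) → MultilinearMap ℂ (fun _ : Fin k => W6) W6)
    (hstrict : ∀ k, k ≠ 2 → μh k = 0)
    (hdegh : ∀ (k : ℕ) (d : Fin k → ℤ) (x : Fin k → W6), (∀ i, x i ∈ grading6 (d i)) →
      μh k x ∈ grading6 ((∑ i, d i) + (2 - (k : ℤ))))
    (hjach : ∀ (n : ℕ) (d : Fin n → ℤ) (x : Fin n → W6), (∀ i, x i ∈ grading6 (d i)) →
      HomotopyJacobi (fun k v => μh k v) n d x) :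
    ¬ ∃ φ : (n : ℕ) → MultilinearMap ℂ (fun _ : Fin n => W6) W6,
        (∀ (n : ℕ) (d : Fin n → ℤ) (x : Fin n → W6), (∀ i, x i ∈ grading6 (d i)) →
          φ n x ∈ grading6 ((∑ i, d i) + (1 - (n : ℤ)))) ∧
        (∀ (i : ℕ), 1 ≤ i → ∀ (d : Fin i → ℤ) (x : Fin i → W6),
          (∀ t, x t ∈ grading6 (d t)) →
          MorphCoherence (fun k v => μg k v) (fun k v => μh k v) (fun n v => φ n v) i d x) ∧
        Function.Bijective (fun w : W6 => φ 1 (fun _ => w)) :=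
  no_strict_minimal_model_general μg hμ2 hμ4 hgother μh hstrict
end
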